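/- For all nonnegative integers m, k, j with j ≤ k ≤ m, the quantity C(m,k−j)·C(m,k+j) − C(m,k−j−1)·C(m,k+j+1) is nonnegative (log-concavity of binomial products along antidiagonals). -/

import Mathlib

/-!
Writing `a = k - j - 1` and `b = k + j`, the claim is `C(m,a) C(m,b+1) ≤ C(m,a+1) C(m,b)` for
`a ≤ b`. Since `C(m,i+1) / C(m,i) = (m-i)/(i+1)` decreases in `i`, the ratio at `b` is at most
the ratio at `a`, which is the inequality after clearing denominators. When `k - j - 1 < 0` the
subtracted product vanishes.
-/

/-- Binomial coefficient with integer lower index, with the convention that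
`C a b = 0` when `b < 0` or `b > a`. -/
def intChoose (a : ℕ) (b : ℤ) : ℤ :=
  if 0 ≤ b ∧ b ≤ (a : ℤ) then (a.choose b.toNat : ℤ) else 0

lemma intChoose_natCast (a n : ℕ) : intChoose a n = a.choose n := by
  unfold intChoose
  split_ifs with h
  · simp
  · rw [Nat.choose_eq_zero_of_lt (by omega), Nat.cast_zero]

lemma intChoose_of_neg (a : ℕ) {b : ℤ} (hb : b < 0) : intChoose a b = 0 :=
  if_neg fun h => hb.not_ge h.1

lemma intChoose_nonneg (a : ℕ) (b : ℤ) : 0 ≤ intChoose a b := by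
  unfold intChoose
  split <;> positivity

theorem Nat.choose_mul_choose_succ_le_choose_succ_mul_choose (m : ℕ) {a b : ℕ} (hab : a ≤ b) :
    m.choose a * m.choose (b + 1) ≤ m.choose (a + 1) * m.choose b := by
  refine Nat.le_of_mul_le_mul_right ?_ (by positivity : 0 < (a + 1) * (b + 1))
  calc m.choose a * m.choose (b + 1) * ((a + 1) * (b + 1))
      = m.choose a * (m.choose (b + 1) * (b + 1)) * (a + 1) := by ring
    _ = m.choose a * m.choose b * ((m - b) * (a + 1)) := by rw [Nat.choose_succ_right_eq]; ring
    _ ≤ m.choose a * m.choose b * ((m - a) * (b + 1)) := by gcongr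
    _ = m.choose a * (m - a) * m.choose b * (b + 1) := by ring
    _ = m.choose (a + 1) * m.choose b * ((a + 1) * (b + 1)) := by
        rw [← Nat.choose_succ_right_eq]; ring

theorem binomial_antidiagonal_log_concave_general (m k j : ℕ) :
    0 ≤ intChoose m ((k : ℤ) - j) * intChoose m ((k : ℤ) + j)
        - intChoose m ((k : ℤ) - j - 1) * intChoose m ((k : ℤ) + j + 1) := by
  rcases lt_or_ge j k with hjk | hkj
  · rw [show (k : ℤ) - j - 1 = ↑(k - j - 1) by omega, show (k : ℤ) - j = ↑(k - j - 1 + 1) by omega,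
      show (k : ℤ) + j + 1 = ↑(k + j + 1) by omega, show (k : ℤ) + j = ↑(k + j) by omega]
    simp only [intChoose_natCast, sub_nonneg]
    exact_mod_cast Nat.choose_mul_choose_succ_le_choose_succ_mul_choose m (by omega)
  · rw [intChoose_of_neg m (b := (k : ℤ) - j - 1) (by omega), zero_mul, sub_zero]
    exact mul_nonneg (intChoose_nonneg _ _) (intChoose_nonneg _ _)

/-- Log-concavity of binomial products along antidiagonals: for `j ≤ k ≤ m`,
`C(m,k−j)·C(m,k+j) − C(m,k−j−1)·C(m,k+j+1) ≥ 0`. -/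
theorem binomial_antidiagonal_log_concave (m k j : ℕ) (hj : j ≤ k) (hk : k ≤ m) :
    0 ≤ intChoose m ((k : ℤ) - j) * intChoose m ((k : ℤ) + j)
        - intChoose m ((k : ℤ) - j - 1) * intChoose m ((k : ℤ) + j + 1) :=
  binomial_antidiagonal_log_concave_general m k j
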